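/- arXiv:2303.03002 — 6 statements merged into one kernel-verified Lean document; each statement's English description precedes it below -/
import Mathlib

section
/- Let E be a finite-dimensional real inner product space, D ⊆ E a linear subspace, and W := ♭(D) ⊆ E* its image under the musical isomorphism. Let ω be the canonical symplectic form on E × E*, ω((v,α),(w,β)) = β(v) − α(w). Then the restriction of ω to the subspace D × W ⊆ E × E* is nondegenerate, i.e., D × W is a symplectic subspace of (E × E*, ω). -/
open InnerProductSpace

/-- The canonical symplectic form on `E × E*`: `ω((v,α),(w,β)) = β(v) − α(w)`. -/
def canOmega (E : Type*) [NormedAddCommGroup E] [NormedSpace ℝ E] :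
    (E × (E →L[ℝ] ℝ)) → (E × (E →L[ℝ] ℝ)) → ℝ :=
  fun x y => y.2 x.1 - x.2 y.1

section canOmega

variable {E : Type*} [NormedAddCommGroup E] [NormedSpace ℝ E]

theorem canOmega_zero_prod (z : E × (E →L[ℝ] ℝ)) (β : E →L[ℝ] ℝ) :
    canOmega E z (0, β) = β z.1 := by
  simp [canOmega]

theorem canOmega_prod_zero (z : E × (E →L[ℝ] ℝ)) (w : E) :
    canOmega E z (w, 0) = -z.2 w := by
  simp [canOmega]

end canOmega

/-- Pairing `(v, ♭d)` with `(0, ♭v)` gives `‖v‖²`, and with `(d, 0)` gives `-‖d‖²`. -/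
theorem restriction_of_canonical_symplectic_form_to_D_prod_flatD_nondegenerate
    (E : Type*) [NormedAddCommGroup E] [InnerProductSpace ℝ E] [FiniteDimensional ℝ E]
    (D : Submodule ℝ E)
    (W : Submodule ℝ (E →L[ℝ] ℝ))
    (hW : W = Submodule.map (InnerProductSpace.toDual ℝ E).toLinearEquiv.toLinearMap D) :
    ∀ z ∈ D.prod W, (∀ u ∈ D.prod W, canOmega E z u = 0) → z = 0 := by
  subst hW
  rintro ⟨v, _⟩ ⟨hv, d, hd, rfl⟩ h
  have hv0 : v = 0 := by
    have hvv := h (0, toDual ℝ E v) ⟨D.zero_mem, v, hv, rfl⟩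
    rwa [canOmega_zero_prod, toDual_apply_apply, inner_self_eq_zero] at hvv
  have hd0 : d = 0 := by
    have hdd := h (d, 0) ⟨hd, Submodule.zero_mem _⟩
    rwa [canOmega_prod_zero, neg_eq_zero, LinearEquiv.coe_coe,
      LinearIsometryEquiv.coe_toLinearEquiv, toDual_apply_apply, inner_self_eq_zero] at hdd
  simp [hv0, hd0]
end

section
/- Let E be a finite-dimensional real inner product space, D ⊆ E a linear subspace, W := ♭(D) ⊆ E*. Let P : E × E* → E × E* be the linear projection onto D × W along Dᗮ × D°. Then P acts componentwise by orthogonal projections: P(v,α) = (pr_D(v), γ(α)), where pr_D : E → E is the orthogonal projection onto D and γ : E* → E* is the orthogonal projection onto W with respect to the dual inner product ⟪·,·⟫_*. In particular, the second component of P coincides with Eden's projector γ. -/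
open InnerProductSpace

/-- The annihilator `D° = {α ∈ E* : α|_D = 0}` of a subspace `D ⊆ E` inside the
(continuous) dual of `E`. -/
noncomputable def Submodule.contAnnihilator {E : Type*} [NormedAddCommGroup E]
    [InnerProductSpace ℝ E] (D : Submodule ℝ E) : Submodule ℝ (E →L[ℝ] ℝ) where
  carrier := {α | ∀ v ∈ D, α v = 0}
  add_mem' := by
    intro a b ha hb v hv
    simp [ha v hv, hb v hv]
  zero_mem' := by
    intro v hv
    simp
  smul_mem' := by
    intro t a ha v hv
    simp [ha v hv]

/-- The inner product `⟪·,·⟫_*` induced on the dual `E*` by the musical isomorphism: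
`⟪α,β⟫_* = ⟪♯α, ♯β⟫`. -/
noncomputable def dualInner {E : Type*} [NormedAddCommGroup E] [InnerProductSpace ℝ E]
    [FiniteDimensional ℝ E] (α β : E →L[ℝ] ℝ) : ℝ :=
  inner ℝ ((InnerProductSpace.toDual ℝ E).symm α) ((InnerProductSpace.toDual ℝ E).symm β)

/-! Under the musical isomorphism `♯ = (toDual ℝ E).symm`, the subspace `W = ♭(D)` corresponds
to `D`, the annihilator `D°` to `Dᗮ` and `⟪·,·⟫_*` to `⟪·,·⟫`. Hence the second components of both
`P (v, α)` and `γ α` are sent by `♯` to the orthogonal projection of `♯α` onto `D`, and so agree;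
the first component of `P (v, α)` is `pr_D v` by the characterization of orthogonal projection. -/

section Sharp

variable {E : Type*} [NormedAddCommGroup E] [InnerProductSpace ℝ E] [CompleteSpace E]
  {D : Submodule ℝ E}

theorem toDual_symm_mem_of_mem_map_toDual {α : E →L[ℝ] ℝ}
    (hα : α ∈ D.map (toDual ℝ E).toLinearEquiv.toLinearMap) : (toDual ℝ E).symm α ∈ D :=
  (Submodule.mem_map_equiv _).1 hα

theorem toDual_symm_mem_orthogonal_of_mem_contAnnihilator {α : E →L[ℝ] ℝ}
    (hα : α ∈ D.contAnnihilator) : (toDual ℝ E).symm α ∈ Dᗮ := fun v hv => by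
  rw [real_inner_comm, toDual_symm_apply]
  exact hα v hv

end Sharp

theorem toDual_symm_mem_orthogonal_of_dualInner_eq_zero {E : Type*} [NormedAddCommGroup E]
    [InnerProductSpace ℝ E] [FiniteDimensional ℝ E] {D : Submodule ℝ E} {α : E →L[ℝ] ℝ}
    (hα : ∀ w ∈ D.map (toDual ℝ E).toLinearEquiv.toLinearMap, dualInner α w = 0) :
    (toDual ℝ E).symm α ∈ Dᗮ := fun v hv => by
  rw [real_inner_comm, toDual_symm_apply]
  simpa [dualInner] using hα (toDual ℝ E v) ⟨v, hv, rfl⟩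

/-- Let `D ⊆ E`, `W := ♭(D) ⊆ E*`, and let `P : E × E* → E × E*` be the
projection onto `D × W` along `Dᗮ × D°`. Then `P` acts componentwise by orthogonal
projections: `P(v,α) = (pr_D v, γ α)`, where `pr_D` is the orthogonal projection of `E` onto
`D` and `γ` is the orthogonal projection of `E*` onto `W` w.r.t. the dual inner product
`⟪·,·⟫_*` (Eden's projector). -/
theorem symplectic_projection_is_componentwise_orthogonal_projection
    (E : Type*) [NormedAddCommGroup E] [InnerProductSpace ℝ E] [FiniteDimensional ℝ E]
    (D : Submodule ℝ E)
    (W : Submodule ℝ (E →L[ℝ] ℝ))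
    (hW : W = Submodule.map (InnerProductSpace.toDual ℝ E).toLinearEquiv.toLinearMap D)
    -- `γ` is the orthogonal projection of `E*` onto `W` w.r.t. the dual inner product:
    (γ : (E →L[ℝ] ℝ) → (E →L[ℝ] ℝ))
    (hγW : ∀ α, γ α ∈ W)
    (hγorth : ∀ α, ∀ w ∈ W, dualInner (α - γ α) w = 0)
    -- `P` is the projection onto `D × W` along `Dᗮ × D°`:
    (P : E × (E →L[ℝ] ℝ) → E × (E →L[ℝ] ℝ))
    (hPmem : ∀ x, P x ∈ D.prod W)
    (hPcompl : ∀ x, x - P x ∈ Dᗮ.prod D.contAnnihilator) :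
    ∀ (v : E) (α : E →L[ℝ] ℝ), P (v, α) = ((D.orthogonalProjectionOnto v : E), γ α) := by
  intro v α
  subst hW
  obtain ⟨hPD, hPW⟩ := Submodule.mem_prod.1 (hPmem (v, α))
  obtain ⟨hPDorth, hPann⟩ := Submodule.mem_prod.1 (hPcompl (v, α))
  have hfst : (P (v, α)).1 = D.starProjection v :=
    (D.eq_starProjection_of_mem_orthogonal hPD hPDorth).symm
  have hsnd : (toDual ℝ E).symm (P (v, α)).2 = D.starProjection ((toDual ℝ E).symm α) :=
    (D.eq_starProjection_of_mem_orthogonal (toDual_symm_mem_of_mem_map_toDual hPW) <| by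
      simpa only [Prod.snd_sub, map_sub] using toDual_symm_mem_orthogonal_of_mem_contAnnihilator hPann).symm
  have hγ : (toDual ℝ E).symm (γ α) = D.starProjection ((toDual ℝ E).symm α) :=
    (D.eq_starProjection_of_mem_orthogonal (toDual_symm_mem_of_mem_map_toDual (hγW α)) <| by
      simpa only [map_sub] using toDual_symm_mem_orthogonal_of_dualInner_eq_zero (hγorth α)).symm
  exact Prod.ext hfst ((toDual ℝ E).symm.injective (hsnd.trans hγ.symm))
end

section
/- Let E be a finite-dimensional real inner product space, D ⊆ E a linear subspace, W := ♭(D) ⊆ E*, γ : E* → E* the orthogonal projection onto W with respect to ⟪·,·⟫_*, and Γ : E × E* → E × W, Γ(q,p) := (q, γ(p)). Let f : E × W → ℝ be differentiable and set F := f ∘ Γ : E × E* → ℝ. Then for every x ∈ E × E*, if z ∈ E × E* satisfies ω(z, u) = DF(x)(u) for all u ∈ E × E* (i.e., z = X_F(x) is the Hamiltonian vector of F at x), the first component of z lies in D. -/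
open InnerProductSpace

/-! The Hamiltonian vector field `X_F` of `F = f ∘ Γ` pairs with a covector `(0, ♭v)`, `v ∈ Dᗮ`,
to `⟪v, Tπ(X_F)⟫`, and this equals `DF(x)(0, ♭v)`. Since `♭v ⊥ W`, moving `p` along `♭v` does not
change `γ p`, so `F` is constant along that direction and `DF(x)(0, ♭v) = 0`.
Hence `Tπ(X_F) ∈ Dᗮᗮ = D`. -/

theorem fderiv_apply_eq_zero_of_forall_add_smul_eq {𝕜 E F : Type*} [NontriviallyNormedField 𝕜]
    [NormedAddCommGroup E] [NormedSpace 𝕜 E] [NormedAddCommGroup F] [NormedSpace 𝕜 F]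
    {f : E → F} {x u : E} (hf : ∀ t : 𝕜, f (x + t • u) = f x) : fderiv 𝕜 f x u = 0 := by
  by_cases hdiff : DifferentiableAt 𝕜 f x
  · rw [← hdiff.lineDeriv_eq_fderiv, lineDeriv]
    simp only [hf, deriv_const]
  · simp [fderiv_zero_of_not_differentiableAt hdiff]

section DualInner

variable {E : Type*} [NormedAddCommGroup E] [InnerProductSpace ℝ E] [FiniteDimensional ℝ E]

theorem dualInner_toDual (v w : E) : dualInner (toDual ℝ E v) (toDual ℝ E w) = inner ℝ v w := by
  simp [dualInner]

theorem dualInner_sub_left (α β γ : E →L[ℝ] ℝ) :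
    dualInner (α - β) γ = dualInner α γ - dualInner β γ := by
  simp [dualInner, inner_sub_left]

theorem dualInner_add_left (α β γ : E →L[ℝ] ℝ) :
    dualInner (α + β) γ = dualInner α γ + dualInner β γ := by
  simp [dualInner, inner_add_left]

theorem dualInner_smul_left (c : ℝ) (α β : E →L[ℝ] ℝ) :
    dualInner (c • α) β = c * dualInner α β := by
  simp [dualInner, real_inner_smul_left]

theorem dualInner_self_eq_zero {α : E →L[ℝ] ℝ} : dualInner α α = 0 ↔ α = 0 := by
  simp [dualInner]

/-- Uniqueness of the orthogonal projection onto `W` for `⟪·,·⟫_*`. -/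
theorem eq_of_dualInner_sub_eq_zero {W : Submodule ℝ (E →L[ℝ] ℝ)} {α w₁ w₂ : E →L[ℝ] ℝ}
    (hw₁ : w₁ ∈ W) (hw₂ : w₂ ∈ W) (h₁ : ∀ w ∈ W, dualInner (α - w₁) w = 0)
    (h₂ : ∀ w ∈ W, dualInner (α - w₂) w = 0) : w₁ = w₂ := by
  have hmem : w₁ - w₂ ∈ W := W.sub_mem hw₁ hw₂
  have hself : dualInner (w₁ - w₂) (w₁ - w₂) = 0 := by
    calc dualInner (w₁ - w₂) (w₁ - w₂)
        = dualInner (α - w₂) (w₁ - w₂) - dualInner (α - w₁) (w₁ - w₂) := by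
          simp only [dualInner_sub_left]; ring
      _ = 0 := by rw [h₁ _ hmem, h₂ _ hmem, sub_zero]
  exact sub_eq_zero.mp (dualInner_self_eq_zero.mp hself)

theorem apply_add_eq_of_forall_dualInner_eq_zero {W : Submodule ℝ (E →L[ℝ] ℝ)}
    {γ : (E →L[ℝ] ℝ) → (E →L[ℝ] ℝ)} (hγW : ∀ α, γ α ∈ W)
    (hγorth : ∀ α, ∀ w ∈ W, dualInner (α - γ α) w = 0) (α : E →L[ℝ] ℝ) {β : E →L[ℝ] ℝ}
    (hβ : ∀ w ∈ W, dualInner β w = 0) : γ (α + β) = γ α := by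
  refine eq_of_dualInner_sub_eq_zero (hγW _) (hγW α) (hγorth _) fun w hw => ?_
  rw [add_sub_right_comm, dualInner_add_left, hγorth α w hw, hβ w hw, add_zero]

theorem dualInner_toDual_eq_zero_of_mem_orthogonal {D : Submodule ℝ E} {v : E} (hv : v ∈ Dᗮ) :
    ∀ w ∈ D.map (toDual ℝ E).toLinearEquiv.toLinearMap, dualInner (toDual ℝ E v) w = 0 := by
  rintro _ ⟨d, hd, rfl⟩
  exact (dualInner_toDual v d).trans (Submodule.inner_left_of_mem_orthogonal hd hv)

end DualInner

theorem hamiltonian_vector_of_gamma_extension_is_D_horizontal_general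
    (E : Type*) [NormedAddCommGroup E] [InnerProductSpace ℝ E] [FiniteDimensional ℝ E]
    (D : Submodule ℝ E)
    (W : Submodule ℝ (E →L[ℝ] ℝ))
    (hW : W = Submodule.map (InnerProductSpace.toDual ℝ E).toLinearEquiv.toLinearMap D)
    (γ : (E →L[ℝ] ℝ) → (E →L[ℝ] ℝ))
    (hγW : ∀ α, γ α ∈ W)
    (hγorth : ∀ α, ∀ w ∈ W, dualInner (α - γ α) w = 0)
    (f : E × ↥W → ℝ)
    (F : E × (E →L[ℝ] ℝ) → ℝ)
    (hF : ∀ x : E × (E →L[ℝ] ℝ), F x = f (x.1, ⟨γ x.2, hγW x.2⟩)) :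
    ∀ (x z : E × (E →L[ℝ] ℝ)),
      (∀ u : E × (E →L[ℝ] ℝ), canOmega E z u = fderiv ℝ F x u) → z.1 ∈ D := by
  intro x z hz
  rw [← D.orthogonal_orthogonal]
  intro v hv
  have hflat : ∀ w ∈ W, dualInner (toDual ℝ E v) w = 0 :=
    hW ▸ dualInner_toDual_eq_zero_of_mem_orthogonal hv
  have hconst : ∀ t : ℝ, F (x + t • (0, toDual ℝ E v)) = F x := fun t => by
    have hγ := apply_add_eq_of_forall_dualInner_eq_zero hγW hγorth x.2 (β := t • toDual ℝ E v)
      fun w hw => by rw [dualInner_smul_left, hflat w hw, mul_zero]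
    simp only [hF, Prod.fst_add, Prod.snd_add, Prod.smul_mk, smul_zero, add_zero, hγ]
  have hω := hz (0, toDual ℝ E v)
  rw [fderiv_apply_eq_zero_of_forall_add_smul_eq hconst] at hω
  simpa [canOmega] using hω

/-- Let `D ⊆ E`, `W := ♭(D) ⊆ E*`, `γ : E* → E*` the orthogonal projection
onto `W` w.r.t. `⟪·,·⟫_*`, and `Γ(q,p) := (q, γ(p))`. Let `f : E × W → ℝ` be differentiable and
`F := f ∘ Γ`. Then for every `x ∈ E × E*`, if `z` satisfies `ω(z,u) = DF(x)(u)` for all `u`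
(i.e. `z = X_F(x)` is the Hamiltonian vector of `F` at `x`), then the first component of `z`
lies in `D`. -/
theorem hamiltonian_vector_of_gamma_extension_is_D_horizontal
    (E : Type*) [NormedAddCommGroup E] [InnerProductSpace ℝ E] [FiniteDimensional ℝ E]
    (D : Submodule ℝ E)
    (W : Submodule ℝ (E →L[ℝ] ℝ))
    (hW : W = Submodule.map (InnerProductSpace.toDual ℝ E).toLinearEquiv.toLinearMap D)
    (γ : (E →L[ℝ] ℝ) → (E →L[ℝ] ℝ))
    (hγW : ∀ α, γ α ∈ W)
    (hγorth : ∀ α, ∀ w ∈ W, dualInner (α - γ α) w = 0)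
    (f : E × ↥W → ℝ) (hf : Differentiable ℝ f)
    (F : E × (E →L[ℝ] ℝ) → ℝ)
    (hF : ∀ x : E × (E →L[ℝ] ℝ), F x = f (x.1, ⟨γ x.2, hγW x.2⟩)) :
    ∀ (x z : E × (E →L[ℝ] ℝ)),
      (∀ u : E × (E →L[ℝ] ℝ), canOmega E z u = fderiv ℝ F x u) → z.1 ∈ D :=
  hamiltonian_vector_of_gamma_extension_is_D_horizontal_general E D W hW γ hγW hγorth f F hF
end

section
/- Let E be a finite-dimensional real inner product space, D ⊆ E a linear subspace, W := ♭(D) ⊆ E*, γ : E* → E* the orthogonal projection onto W with respect to ⟪·,·⟫_*, and ω the canonical symplectic form on E × E*. Let ξ = (ξ₁, ξ₂) ∈ E × E* with ξ₁ ∈ D. Then z := (ξ₁, γ(ξ₂)) is the unique element of E × W such that the linear functional u ↦ ω(z,u) − ω(ξ,u) on E × E* vanishes on {0} × E* and its restriction to E × {0} belongs to the annihilator D°. Moreover z = P(ξ), where P is the projection onto D × W along Dᗮ × D°. -/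
open InnerProductSpace

/-!
Pairing `ω` with `(0, β)` reads off `β(z₁)`, and pairing with `(v, 0)` reads off `−z₂(v)`, so the
two conditions say exactly `z₁ = ξ₁` and `z₂ − ξ₂ ∈ D°`. Since `⟪α, ♭v⟫_* = α(v)`, the defect
`ξ₂ − γ(ξ₂)` of the `⟪·,·⟫_*`-orthogonal projection onto `W = ♭(D)` lies in `D°`, and
`W ∩ D° = 0` because `♭d` vanishing on `D ∋ d` forces `‖d‖² = 0`. Hence the second component is
pinned down uniquely in `W` as `γ(ξ₂)`; the same two disjointness facts `D ∩ Dᗮ = 0` and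
`W ∩ D° = 0` identify `P(ξ)` with `(ξ₁, γ(ξ₂))`.
-/

section

variable {E : Type*} [NormedAddCommGroup E]

@[simp]
theorem canOmega_zero_fst [NormedSpace ℝ E] (z : E × (E →L[ℝ] ℝ)) (β : E →L[ℝ] ℝ) :
    canOmega E z (0, β) = β z.1 := by
  simp [canOmega]

@[simp]
theorem canOmega_zero_snd [NormedSpace ℝ E] (z : E × (E →L[ℝ] ℝ)) (v : E) :
    canOmega E z (v, 0) = -z.2 v := by
  simp [canOmega]

theorem forall_canOmega_zero_fst_sub_eq_zero_iff [NormedSpace ℝ E] (z ξ : E × (E →L[ℝ] ℝ)) :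
    (∀ β : E →L[ℝ] ℝ, canOmega E z (0, β) - canOmega E ξ (0, β) = 0) ↔ z.1 = ξ.1 := by
  simp only [canOmega_zero_fst, sub_eq_zero]
  exact (SeparatingDual.eq_iff_forall_dual_eq (R := ℝ)).symm

variable [InnerProductSpace ℝ E]

theorem Submodule.mem_contAnnihilator {D : Submodule ℝ E} {α : E →L[ℝ] ℝ} :
    α ∈ D.contAnnihilator ↔ ∀ v ∈ D, α v = 0 :=
  Iff.rfl

theorem forall_canOmega_zero_snd_sub_eq_zero_iff (D : Submodule ℝ E) (z ξ : E × (E →L[ℝ] ℝ)) :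
    (∀ v ∈ D, canOmega E z (v, 0) - canOmega E ξ (v, 0) = 0) ↔
      z.2 - ξ.2 ∈ D.contAnnihilator := by
  simp only [canOmega_zero_snd, Submodule.mem_contAnnihilator, sub_apply]
  refine forall₂_congr fun v _ => ?_
  constructor <;> intro h <;> linarith

theorem Submodule.disjoint_map_toDual_contAnnihilator [CompleteSpace E] (D : Submodule ℝ E) :
    Disjoint (D.map (toDual ℝ E).toLinearEquiv.toLinearMap) D.contAnnihilator := by
  rw [Submodule.disjoint_def]
  rintro _ ⟨d, hd, rfl⟩ hvan
  have hdd : inner ℝ d d = (0 : ℝ) := hvan d hd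
  simp [inner_self_eq_zero.1 hdd]

variable [FiniteDimensional ℝ E]

theorem dualInner_toDual_right (α : E →L[ℝ] ℝ) (v : E) : dualInner α (toDual ℝ E v) = α v := by
  simp [dualInner, toDual_symm_apply]

theorem mem_contAnnihilator_of_forall_dualInner_eq_zero {D : Submodule ℝ E} {α : E →L[ℝ] ℝ}
    (h : ∀ w ∈ D.map (toDual ℝ E).toLinearEquiv.toLinearMap, dualInner α w = 0) :
    α ∈ D.contAnnihilator := fun v hv =>
  dualInner_toDual_right α v ▸ h _ (Submodule.mem_map_of_mem hv)

end

/-- Let `ξ = (ξ₁, ξ₂) ∈ E × E*` with `ξ₁ ∈ D`. Then `z := (ξ₁, γ(ξ₂))` is the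
unique element of `E × W` such that the linear functional `u ↦ ω(z,u) − ω(ξ,u)` on `E × E*`
vanishes on `{0} × E*` and its restriction to `E × {0}` belongs to the annihilator `D°`.
Moreover `z = P(ξ)`, where `P` is the projection onto `D × W` along `Dᗮ × D°`. -/
theorem nonholonomic_projection_of_hamiltonian_vector
    (E : Type*) [NormedAddCommGroup E] [InnerProductSpace ℝ E] [FiniteDimensional ℝ E]
    (D : Submodule ℝ E)
    (W : Submodule ℝ (E →L[ℝ] ℝ))
    (hW : W = Submodule.map (InnerProductSpace.toDual ℝ E).toLinearEquiv.toLinearMap D)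
    -- `γ` is the orthogonal projection of `E*` onto `W` w.r.t. the dual inner product:
    (γ : (E →L[ℝ] ℝ) → (E →L[ℝ] ℝ))
    (hγW : ∀ α, γ α ∈ W)
    (hγorth : ∀ α, ∀ w ∈ W, dualInner (α - γ α) w = 0)
    -- `P` is the projection onto `D × W` along `Dᗮ × D°`:
    (P : E × (E →L[ℝ] ℝ) → E × (E →L[ℝ] ℝ))
    (hPmem : ∀ x, P x ∈ D.prod W)
    (hPcompl : ∀ x, x - P x ∈ Dᗮ.prod D.contAnnihilator)
    (ξ : E × (E →L[ℝ] ℝ)) (hξ : ξ.1 ∈ D) :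
    ((γ ξ.2 ∈ W) ∧
      (∀ β : E →L[ℝ] ℝ,
        canOmega E (ξ.1, γ ξ.2) (0, β) - canOmega E ξ (0, β) = 0) ∧
      (∀ v ∈ D,
        canOmega E (ξ.1, γ ξ.2) (v, 0) - canOmega E ξ (v, 0) = 0)) ∧
    (∀ z' : E × (E →L[ℝ] ℝ), z'.2 ∈ W →
      (∀ β : E →L[ℝ] ℝ, canOmega E z' (0, β) - canOmega E ξ (0, β) = 0) →
      (∀ v ∈ D, canOmega E z' (v, 0) - canOmega E ξ (v, 0) = 0) →
      z' = (ξ.1, γ ξ.2)) ∧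
    (ξ.1, γ ξ.2) = P ξ := by
  have hann : ξ.2 - γ ξ.2 ∈ D.contAnnihilator :=
    mem_contAnnihilator_of_forall_dualInner_eq_zero (hW ▸ hγorth ξ.2)
  have hdisj : Disjoint W D.contAnnihilator := hW ▸ D.disjoint_map_toDual_contAnnihilator
  have eq_γ : ∀ β ∈ W, β - ξ.2 ∈ D.contAnnihilator → β = γ ξ.2 := fun β hβ h =>
    sub_eq_zero.1 <| Submodule.disjoint_def.1 hdisj _ (W.sub_mem hβ (hγW ξ.2))
      (sub_add_sub_cancel β ξ.2 (γ ξ.2) ▸ D.contAnnihilator.add_mem h hann)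
  refine ⟨⟨hγW ξ.2, (forall_canOmega_zero_fst_sub_eq_zero_iff _ _).2 rfl,
      (forall_canOmega_zero_snd_sub_eq_zero_iff D _ _).2 ?_⟩, ?_, ?_⟩
  · simpa using D.contAnnihilator.neg_mem hann
  · intro z' hz' h₁ h₂
    exact Prod.ext ((forall_canOmega_zero_fst_sub_eq_zero_iff z' ξ).1 h₁)
      (eq_γ _ hz' ((forall_canOmega_zero_snd_sub_eq_zero_iff D z' ξ).1 h₂))
  · obtain ⟨hPD, hPW⟩ := Submodule.mem_prod.1 (hPmem ξ)
    obtain ⟨hPDperp, hPann⟩ := Submodule.mem_prod.1 (hPcompl ξ)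
    refine Prod.ext ?_ (eq_γ _ hPW ?_).symm
    · exact sub_eq_zero.1 <| Submodule.disjoint_def.1 D.orthogonal_disjoint _
        (D.sub_mem hξ hPD) hPDperp
    · simpa using D.contAnnihilator.neg_mem hPann
end

section
/- Let E be a finite-dimensional real inner product space, D ⊆ E a linear subspace, W := ♭(D) ⊆ E*, γ : E* → E* the orthogonal projection onto W with respect to ⟪·,·⟫_*, Γ(q,p) := (q, γ(p)), ω the canonical symplectic form on E × E*, and P the projection onto D × W along Dᗮ × D°. For differentiable F : E × E* → ℝ let X_F(x) be the unique element with ω(X_F(x), u) = DF(x)(u) for all u. Then for all smooth f, g : E × W → ℝ and every m ∈ E × W, ω(P(X_{f∘Γ}(m)), P(X_{g∘Γ}(m))) = ω(X_{f∘Γ}(m), X_{g∘Γ}(m)); that is, the nonholonomic bracket {f,g}_nh(m) := ω(P(X_{f∘Γ}(m)), P(X_{g∘Γ}(m))) coincides with the Eden bracket {f,g}_E(m) := ω(X_{f∘Γ}(m), X_{g∘Γ}(m)). -/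
open InnerProductSpace

/-!
The orthogonal projection `γ` of `E*` onto `♭(D)` is `♭ ∘ proj_D ∘ ♯`, a linear map that kills
`D°`. Hence `f ∘ Γ` is constant along `{0} × D°`, so `ω(X_{f∘Γ}, (0, β))`, which is `β` applied
to the base component of `X_{f∘Γ}`, vanishes for every `β ∈ D°`: that base component lies in
`D`. On such vectors `P`
fixes the base component and changes the fibre component by an element of `D°`, which `ω`
cannot detect when paired with base components in `D`.
-/

namespace Submodule

variable {E : Type*} [NormedAddCommGroup E] [InnerProductSpace ℝ E]

theorem toDual_mem_contAnnihilator_iff [CompleteSpace E] {D : Submodule ℝ E} {w : E} :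
    toDual ℝ E w ∈ D.contAnnihilator ↔ w ∈ Dᗮ := by
  simp only [mem_orthogonal', ← toDual_apply_apply]
  rfl

theorem toDual_symm_mem_orthogonal [CompleteSpace E] {D : Submodule ℝ E} {β : E →L[ℝ] ℝ}
    (hβ : β ∈ D.contAnnihilator) : (toDual ℝ E).symm β ∈ Dᗮ := by
  rwa [← toDual_mem_contAnnihilator_iff, LinearIsometryEquiv.apply_symm_apply]

theorem mem_iff_forall_contAnnihilator_apply_eq_zero [CompleteSpace E] {D : Submodule ℝ E}
    [D.HasOrthogonalProjection] {v : E} :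
    v ∈ D ↔ ∀ β ∈ D.contAnnihilator, β v = 0 := by
  refine ⟨fun hv β hβ => hβ v hv, fun h => ?_⟩
  rw [← D.orthogonal_orthogonal, mem_orthogonal]
  exact fun w hw => h _ (toDual_mem_contAnnihilator_iff.mpr hw)

theorem fst_eq_of_sub_mem_orthogonal_prod {D : Submodule ℝ E} {V : Submodule ℝ (E →L[ℝ] ℝ)}
    {x y : E × (E →L[ℝ] ℝ)} (hx : x.1 ∈ D) (hy : y.1 ∈ D) (hxy : x - y ∈ Dᗮ.prod V) :
    y.1 = x.1 := by
  have h : x.1 - y.1 ∈ D ⊓ Dᗮ := ⟨D.sub_mem hx hy, hxy.1⟩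
  rw [D.inf_orthogonal_eq_bot, mem_bot, sub_eq_zero] at h
  exact h.symm

variable [CompleteSpace E] (D : Submodule ℝ E) [D.HasOrthogonalProjection]

noncomputable def dualStarProjection : (E →L[ℝ] ℝ) →L[ℝ] (E →L[ℝ] ℝ) :=
  ((toDual ℝ E).toContinuousLinearEquiv : E →L⋆[ℝ] E →L[ℝ] ℝ).comp
    (D.starProjection.comp ((toDual ℝ E).symm.toContinuousLinearEquiv : (E →L[ℝ] ℝ) →L⋆[ℝ] E))

theorem dualStarProjection_apply (α : E →L[ℝ] ℝ) :
    D.dualStarProjection α = toDual ℝ E (D.starProjection ((toDual ℝ E).symm α)) :=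
  rfl

variable {D}

theorem dualStarProjection_eq_zero_of_mem_contAnnihilator {β : E →L[ℝ] ℝ}
    (hβ : β ∈ D.contAnnihilator) : D.dualStarProjection β = 0 := by
  rw [dualStarProjection_apply,
    (starProjection_apply_eq_zero_iff D).mpr (toDual_symm_mem_orthogonal hβ), map_zero]

theorem eq_dualStarProjection [FiniteDimensional ℝ E] {α p : E →L[ℝ] ℝ}
    (hp : p ∈ D.map (toDual ℝ E).toLinearEquiv.toLinearMap)
    (horth : ∀ w ∈ D.map (toDual ℝ E).toLinearEquiv.toLinearMap, dualInner (α - p) w = 0) :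
    p = D.dualStarProjection α := by
  obtain ⟨d, hd, rfl⟩ := hp
  rw [dualStarProjection_apply]
  refine congrArg (toDual ℝ E) (eq_starProjection_of_mem_of_inner_eq_zero hd fun u hu => ?_).symm
  simpa [dualInner] using horth _ ⟨u, hu, rfl⟩

end Submodule

open Submodule

theorem fderiv_comp_apply_eq_zero_of_map_eq_zero {𝕜 E F G : Type*} [NontriviallyNormedField 𝕜]
    [NormedAddCommGroup E] [NormedSpace 𝕜 E] [NormedAddCommGroup F] [NormedSpace 𝕜 F]
    [NormedAddCommGroup G] [NormedSpace 𝕜 G] {f : F → G} {L : E →L[𝕜] F} {x u : E}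
    (hf : DifferentiableAt 𝕜 f (L x)) (hu : L u = 0) : fderiv 𝕜 (f ∘ L) x u = 0 := by
  rw [fderiv_comp x hf L.differentiableAt, L.fderiv, ContinuousLinearMap.comp_apply, hu, map_zero]

theorem canOmega_mk_zero_right {E : Type*} [NormedAddCommGroup E] [NormedSpace ℝ E]
    (x : E × (E →L[ℝ] ℝ)) (β : E →L[ℝ] ℝ) : canOmega E x (0, β) = β x.1 := by
  simp [canOmega]

section Symplectic

variable {E : Type*} [NormedAddCommGroup E] [InnerProductSpace ℝ E]

theorem fst_mem_of_canOmega_eq_fderiv_comp [CompleteSpace E] {D : Submodule ℝ E}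
    [D.HasOrthogonalProjection] {G : Type*} [NormedAddCommGroup G] [NormedSpace ℝ G]
    {Γ : E × (E →L[ℝ] ℝ) →L[ℝ] G} (hΓ : ∀ β ∈ D.contAnnihilator, Γ (0, β) = 0) {h : G → ℝ}
    {x X : E × (E →L[ℝ] ℝ)} (hh : DifferentiableAt ℝ h (Γ x))
    (hX : ∀ u, canOmega E X u = fderiv ℝ (h ∘ Γ) x u) : X.1 ∈ D :=
  mem_iff_forall_contAnnihilator_apply_eq_zero.mpr fun β hβ => by
    rw [← canOmega_mk_zero_right, hX, fderiv_comp_apply_eq_zero_of_map_eq_zero hh (hΓ β hβ)]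

theorem canOmega_eq_of_sub_mem {D : Submodule ℝ E} {x y x' y' : E × (E →L[ℝ] ℝ)}
    (hx : x.1 ∈ D) (hy : y.1 ∈ D) (hx' : x'.1 ∈ D) (hy' : y'.1 ∈ D)
    (hxx' : x - x' ∈ Dᗮ.prod D.contAnnihilator) (hyy' : y - y' ∈ Dᗮ.prod D.contAnnihilator) :
    canOmega E x' y' = canOmega E x y := by
  have hy'x : y'.2 x.1 = y.2 x.1 := (sub_eq_zero.mp (hyy'.2 x.1 hx)).symm
  have hx'y : x'.2 y.1 = x.2 y.1 := (sub_eq_zero.mp (hxx'.2 y.1 hy)).symm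
  simp only [canOmega, fst_eq_of_sub_mem_orthogonal_prod hx hx' hxx',
    fst_eq_of_sub_mem_orthogonal_prod hy hy' hyy', hy'x, hx'y]

end Symplectic

/-- With `Γ(q,p) := (q, γ(p))` and `P` the projection onto `D × W` along
`Dᗮ × D°`, for all smooth `f, g : E × W → ℝ` and every `m ∈ E × W`,
`ω(𝒫(X_{f∘Γ}(m)), 𝒫(X_{g∘Γ}(m))) = ω(X_{f∘Γ}(m), X_{g∘Γ}(m))`; i.e. the nonholonomic bracket
`{f,g}_nh` coincides with the Eden bracket `{f,g}_E`. -/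
theorem nonholonomic_bracket_eq_eden_bracket
    (E : Type*) [NormedAddCommGroup E] [InnerProductSpace ℝ E] [FiniteDimensional ℝ E]
    (D : Submodule ℝ E)
    (W : Submodule ℝ (E →L[ℝ] ℝ))
    (hW : W = Submodule.map (InnerProductSpace.toDual ℝ E).toLinearEquiv.toLinearMap D)
    -- `γ` is the orthogonal projection of `E*` onto `W` w.r.t. the dual inner product:
    (γ : (E →L[ℝ] ℝ) → (E →L[ℝ] ℝ))
    (hγW : ∀ α, γ α ∈ W)
    (hγorth : ∀ α, ∀ w ∈ W, dualInner (α - γ α) w = 0)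
    -- `P` is the projection onto `D × W` along `Dᗮ × D°`:
    (P : E × (E →L[ℝ] ℝ) → E × (E →L[ℝ] ℝ))
    (hPmem : ∀ x, P x ∈ D.prod W)
    (hPcompl : ∀ x, x - P x ∈ Dᗮ.prod D.contAnnihilator)
    -- `X_F(x)` is the (unique) Hamiltonian vector of `F` at `x`:
    (XF : (E × (E →L[ℝ] ℝ) → ℝ) → E × (E →L[ℝ] ℝ) → E × (E →L[ℝ] ℝ))
    (hXF : ∀ (F : E × (E →L[ℝ] ℝ) → ℝ) (x : E × (E →L[ℝ] ℝ)), DifferentiableAt ℝ F x →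
      ∀ u, canOmega E (XF F x) u = fderiv ℝ F x u)
    (f g : E × ↥W → ℝ) (hf : ContDiff ℝ (⊤ : ℕ∞) f) (hg : ContDiff ℝ (⊤ : ℕ∞) g)
    -- `Ff = f ∘ Γ` and `Fg = g ∘ Γ`:
    (Ff Fg : E × (E →L[ℝ] ℝ) → ℝ)
    (hFf : ∀ x : E × (E →L[ℝ] ℝ), Ff x = f (x.1, ⟨γ x.2, hγW x.2⟩))
    (hFg : ∀ x : E × (E →L[ℝ] ℝ), Fg x = g (x.1, ⟨γ x.2, hγW x.2⟩)) :
    ∀ m : E × ↥W,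
      canOmega E (P (XF Ff (m.1, ↑m.2))) (P (XF Fg (m.1, ↑m.2))) =
        canOmega E (XF Ff (m.1, ↑m.2)) (XF Fg (m.1, ↑m.2)) := by
  obtain rfl : γ = D.dualStarProjection :=
    funext fun α => eq_dualStarProjection (hW ▸ hγW α) (hW ▸ hγorth α)
  let Γ := (ContinuousLinearMap.id ℝ E).prodMap (D.dualStarProjection.codRestrict W hγW)
  have hΓ : ∀ β ∈ D.contAnnihilator, Γ (0, β) = 0 := fun β hβ =>
    Prod.ext rfl (Subtype.ext (dualStarProjection_eq_zero_of_mem_contAnnihilator hβ))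
  have fst_mem : ∀ h : E × ↥W → ℝ, ContDiff ℝ (⊤ : ℕ∞) h → ∀ F : E × (E →L[ℝ] ℝ) → ℝ,
      (∀ x, F x = h (Γ x)) → ∀ x, (XF F x).1 ∈ D := by
    intro h hh F hF x
    obtain rfl : F = h ∘ Γ := funext hF
    have hd : DifferentiableAt ℝ h (Γ x) := (hh.differentiable (by simp)).differentiableAt
    -- `E × ↥W` is given explicitly: unifying the two `Module ℝ ↥W` instances otherwise times out.
    exact fst_mem_of_canOmega_eq_fderiv_comp (G := E × ↥W) hΓ hd
      (hXF _ x (hd.comp x (Γ.differentiableAt (F := E × ↥W))))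
  intro m
  exact canOmega_eq_of_sub_mem (fst_mem f hf Ff hFf _) (fst_mem g hg Fg hFg _)
    (hPmem _).1 (hPmem _).1 (hPcompl _) (hPcompl _)
end

section
/- Let E be a finite-dimensional real inner product space, V : E → ℝ a C¹ function, and define H : E × E* → ℝ by H(q,p) := ½⟪p,p⟫_* + V(q). Let c : ℝ → E be twice differentiable. Then c satisfies the Euler–Lagrange equations for the mechanical Lagrangian L(q,v) = ½⟪v,v⟫ − V(q), i.e., (d/dt)(c'(t)) = −♯(DV(c(t))) for all t, if and only if the curve t ↦ (c(t), ♭(c'(t))) in E × E* satisfies Hamilton's equations for H, i.e., its derivative at each t equals X_H(c(t), ♭(c'(t))), where X_H(x) is the unique element with ω(X_H(x), u) = DH(x)(u) for all u, and ω is the canonical symplectic form on E × E*. -/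
open InnerProductSpace

theorem canOmega_injective (E : Type*) [NormedAddCommGroup E] [NormedSpace ℝ E] :
    Function.Injective (canOmega E) := by
  intro X Y h
  refine Prod.ext ?_ ?_
  · refine (SeparatingDual.eq_iff_forall_dual_eq (R := ℝ)).mpr fun g => ?_
    simpa [canOmega] using congrFun h (0, g)
  · ext w
    simpa [canOmega] using congrFun h (w, 0)

section

variable {E : Type*} [NormedAddCommGroup E] [InnerProductSpace ℝ E] [FiniteDimensional ℝ E]

theorem hasFDerivAt_half_dualInner_self (p : E →L[ℝ] ℝ) :
    HasFDerivAt (fun α : E →L[ℝ] ℝ => (1 / 2 : ℝ) * dualInner α α)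
      (ContinuousLinearMap.apply ℝ ℝ ((toDual ℝ E).symm p)) p := by
  have hsharp :=
    ((toDual ℝ E).symm.toContinuousLinearEquiv : (E →L[ℝ] ℝ) ≃L[ℝ] E).hasFDerivAt (x := p)
  refine ((hsharp.inner ℝ hsharp).const_mul (1 / 2 : ℝ)).congr_fderiv ?_
  ext α
  change (1 / 2 : ℝ) * (⟪(toDual ℝ E).symm p, (toDual ℝ E).symm α⟫_ℝ +
    ⟪(toDual ℝ E).symm α, (toDual ℝ E).symm p⟫_ℝ) = α ((toDual ℝ E).symm p)
  rw [real_inner_comm ((toDual ℝ E).symm α), toDual_symm_apply]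
  ring

theorem hasFDerivAt_mechanicalHamiltonian {V : E → ℝ} {x : E × (E →L[ℝ] ℝ)}
    (hV : DifferentiableAt ℝ V x.1) :
    HasFDerivAt (fun y : E × (E →L[ℝ] ℝ) => (1 / 2 : ℝ) * dualInner y.2 y.2 + V y.1)
      ((ContinuousLinearMap.apply ℝ ℝ ((toDual ℝ E).symm x.2)).comp
          (ContinuousLinearMap.snd ℝ E (E →L[ℝ] ℝ)) +
        (fderiv ℝ V x.1).comp (ContinuousLinearMap.fst ℝ E (E →L[ℝ] ℝ))) x :=
  ((hasFDerivAt_half_dualInner_self x.2).comp x hasFDerivAt_snd).add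
    (hV.hasFDerivAt.comp x hasFDerivAt_fst)

theorem hamiltonianVector_eq {V : E → ℝ} {x : E × (E →L[ℝ] ℝ)}
    (hV : DifferentiableAt ℝ V x.1) {H : E × (E →L[ℝ] ℝ) → ℝ}
    (hH : ∀ x : E × (E →L[ℝ] ℝ), H x = (1 / 2 : ℝ) * dualInner x.2 x.2 + V x.1)
    {XH : E × (E →L[ℝ] ℝ) → E × (E →L[ℝ] ℝ)}
    (hXH : ∀ x u, canOmega E (XH x) u = fderiv ℝ H x u) :
    XH x = ((toDual ℝ E).symm x.2, -fderiv ℝ V x.1) := by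
  rw [funext hH] at hXH
  refine canOmega_injective E (funext fun u => ?_)
  rw [hXH, (hasFDerivAt_mechanicalHamiltonian hV).fderiv]
  simp [canOmega]

end

theorem hasDerivAt_legendreCurve {E : Type*} [NormedAddCommGroup E] [InnerProductSpace ℝ E]
    [CompleteSpace E] {c : ℝ → E} {t : ℝ} (hc : DifferentiableAt ℝ c t)
    (hc' : DifferentiableAt ℝ (deriv c) t) :
    HasDerivAt (fun s => (c s, (toDual ℝ E (deriv c s) : E →L[ℝ] ℝ)))
      (deriv c t, toDual ℝ E (deriv (deriv c) t)) t :=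
  hc.hasDerivAt.prodMk
    ((toDual ℝ E).toContinuousLinearEquiv.hasFDerivAt.comp_hasDerivAt t hc'.hasDerivAt)

/-- A twice differentiable curve `c : ℝ → E` satisfies the Euler–Lagrange
equations for the mechanical Lagrangian `L(q,v) = ½⟪v,v⟫ − V(q)`, i.e.
`(d/dt)(c'(t)) = −♯(DV(c(t)))`, if and only if the Legendre-transformed curve
`t ↦ (c(t), ♭(c'(t)))` in `E × E*` satisfies Hamilton's equations for
`H(q,p) = ½⟪p,p⟫_* + V(q)`, i.e. its derivative equals `X_H` along the curve. -/
theorem euler_lagrange_iff_hamilton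
    (E : Type*) [NormedAddCommGroup E] [InnerProductSpace ℝ E] [FiniteDimensional ℝ E]
    (V : E → ℝ) (hV : ContDiff ℝ 1 V)
    (H : E × (E →L[ℝ] ℝ) → ℝ)
    (hH : ∀ x : E × (E →L[ℝ] ℝ), H x = (1 / 2 : ℝ) * dualInner x.2 x.2 + V x.1)
    -- `X_H(x)` is the (unique) Hamiltonian vector of `H` at `x`:
    (XH : E × (E →L[ℝ] ℝ) → E × (E →L[ℝ] ℝ))
    (hXH : ∀ x u, canOmega E (XH x) u = fderiv ℝ H x u)
    (c : ℝ → E) (hc : Differentiable ℝ c) (hc' : Differentiable ℝ (deriv c)) :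
    (∀ t : ℝ, deriv (deriv c) t =
        -(InnerProductSpace.toDual ℝ E).symm (fderiv ℝ V (c t))) ↔
    (∀ t : ℝ,
      deriv (fun s : ℝ =>
        ((c s, (InnerProductSpace.toDual ℝ E (deriv c s) : E →L[ℝ] ℝ)) :
          E × (E →L[ℝ] ℝ))) t =
      XH (c t, InnerProductSpace.toDual ℝ E (deriv c t))) := by
  refine forall_congr' fun t => ?_
  rw [(hasDerivAt_legendreCurve (hc t) (hc' t)).deriv,
    hamiltonianVector_eq (hV.differentiable one_ne_zero _) hH hXH, Prod.ext_iff]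
  simp only [LinearIsometryEquiv.symm_apply_apply, true_and]
  rw [← (toDual ℝ E).symm.injective.eq_iff, LinearIsometryEquiv.symm_apply_apply, map_neg]
end
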